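/- arXiv:2001.10847 — 3 statements merged into one kernel-verified Lean document; each statement's English description precedes it below -/
import Mathlib

section
/- Let f ∈ BMO(ℝ) and suppose f(x) = 0 for all x ∈ J \ I, where I ⊆ J are intervals with |J| = (1+δ)|I| for some δ > 0. Then for 1 ≤ τ < ∞, ∫_I |f(x)|^τ dx ≤ (1 + δ^{-1})^τ ∫_J |f(x) − avg_J f|^τ dx, where avg_J f = |J|^{-1} ∫_J f. -/
/-!
Let `r = |I|/|J|` and `A = avg_J f`. Since `f` vanishes on `J \ I`, `A = r · avg_I f`, so by
Jensen `|A|^τ |I| ≤ r^τ ∫_I |f|^τ`. Convexity of `x ↦ x^τ` splits `|f| ≤ |f - A| + |A|` as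
`|f|^τ ≤ (1-r)^(1-τ) |f - A|^τ + r^(1-τ) |A|^τ`; integrating over `I` gives
`∫_I |f|^τ ≤ (1-r)^(1-τ) ∫_I |f - A|^τ + r ∫_I |f|^τ`. Absorbing the last term into the left
side leaves the constant `(1-r)^(-τ)`, and `1 - r = δ/(1+δ) = (1+δ⁻¹)⁻¹`.
-/

open MeasureTheory Set

lemma add_rpow_le_weighted {p θ η u v : ℝ} (hp : 1 ≤ p) (hθ : 0 < θ) (hη : 0 < η)
    (hθη : θ + η = 1) (hu : 0 ≤ u) (hv : 0 ≤ v) :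
    (u + v) ^ p ≤ θ ^ (1 - p) * u ^ p + η ^ (1 - p) * v ^ p := by
  have hconv := (convexOn_rpow hp).2 (x := u / θ) (y := v / η)
    (by simp only [mem_Ici]; positivity) (by simp only [mem_Ici]; positivity) hθ.le hη.le hθη
  have hsum : θ • (u / θ) + η • (v / η) = u + v := by
    simp only [smul_eq_mul]
    field_simp
  rw [hsum] at hconv
  calc (u + v) ^ p ≤ θ • (u / θ) ^ p + η • (v / η) ^ p := hconv
    _ = θ ^ (1 - p) * u ^ p + η ^ (1 - p) * v ^ p := by
      rw [Real.div_rpow hu hθ.le, Real.div_rpow hv hη.le, Real.rpow_sub hθ, Real.rpow_sub hη]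
      simp only [smul_eq_mul, Real.rpow_one]
      ring

section

variable {α : Type*} [MeasurableSpace α] {μ : Measure α} {p : ℝ} {f : α → ℝ} {s t : Set α}

lemma MeasureTheory.MemLp.integrable_abs_rpow (hp : 0 < p) (hf : MemLp f (ENNReal.ofReal p) μ) :
    Integrable (fun x => |f x| ^ p) μ := by
  simpa [Real.norm_eq_abs, ENNReal.toReal_ofReal hp.le] using
    hf.integrable_norm_rpow (ENNReal.ofReal_pos.2 hp).ne' ENNReal.ofReal_ne_top

lemma abs_setAverage_rpow_le (hp : 1 ≤ p) (hs0 : μ s ≠ 0) (hs : μ s ≠ ⊤)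
    (hf : MemLp f (ENNReal.ofReal p) (μ.restrict s)) :
    |⨍ x in s, f x ∂μ| ^ p ≤ ⨍ x in s, |f x| ^ p ∂μ := by
  have : IsFiniteMeasure (μ.restrict s) := isFiniteMeasure_restrict.2 hs
  have hfi : IntegrableOn f s μ := hf.integrable (by simpa using hp)
  have habs : |⨍ x in s, f x ∂μ| ≤ ⨍ x in s, |f x| ∂μ := by
    rw [setAverage_eq, setAverage_eq, smul_eq_mul, smul_eq_mul, abs_mul,
      abs_of_nonneg (by positivity)]
    gcongr
    exact abs_integral_le_integral_abs
  calc |⨍ x in s, f x ∂μ| ^ p ≤ (⨍ x in s, |f x| ∂μ) ^ p := by gcongr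
    _ ≤ ⨍ x in s, |f x| ^ p ∂μ :=
      (convexOn_rpow hp).map_set_average_le (continuousOn_id.rpow_const fun _ _ => by
        right; linarith) isClosed_Ici hs0 hs (.of_forall fun x => abs_nonneg (f x))
        hfi.abs (hf.integrable_abs_rpow (by linarith))

lemma setIntegral_abs_rpow_le_weighted (hp : 1 ≤ p) {θ η : ℝ} (hθ : 0 < θ) (hη : 0 < η)
    (hθη : θ + η = 1) (hs : μ s ≠ ⊤) (hf : MemLp f (ENNReal.ofReal p) (μ.restrict s)) (c : ℝ) :
    ∫ x in s, |f x| ^ p ∂μ ≤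
      θ ^ (1 - p) * ∫ x in s, |f x - c| ^ p ∂μ + η ^ (1 - p) * |c| ^ p * μ.real s := by
  have : IsFiniteMeasure (μ.restrict s) := isFiniteMeasure_restrict.2 hs
  have hp0 : 0 < p := by linarith
  have hfc : IntegrableOn (fun x => |f x - c| ^ p) s μ :=
    (hf.sub (memLp_const c)).integrable_abs_rpow hp0
  have hpointwise (x : α) :
      |f x| ^ p ≤ θ ^ (1 - p) * |f x - c| ^ p + η ^ (1 - p) * |c| ^ p := by
    have htriangle : |f x| ≤ |f x - c| + |c| := by
      linarith [abs_sub_abs_le_abs_sub (f x) c]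
    calc |f x| ^ p ≤ (|f x - c| + |c|) ^ p := by gcongr
      _ ≤ _ := add_rpow_le_weighted hp hθ hη hθη (abs_nonneg _) (abs_nonneg _)
  calc ∫ x in s, |f x| ^ p ∂μ
      ≤ ∫ x in s, (θ ^ (1 - p) * |f x - c| ^ p + η ^ (1 - p) * |c| ^ p) ∂μ :=
        integral_mono (hf.integrable_abs_rpow hp0) ((hfc.const_mul _).add (integrable_const _))
          hpointwise
    _ = _ := by
      rw [integral_add (hfc.const_mul _) (integrable_const _), integral_const_mul,
        setIntegral_const, smul_eq_mul]
      ring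

theorem setIntegral_abs_rpow_le_of_eq_zero_on_diff (hp : 1 ≤ p) (ht : MeasurableSet t)
    (hst : s ⊆ t) (hs0 : μ s ≠ 0) (hμst : μ s < μ t) (ht_top : μ t ≠ ⊤)
    (hf : MemLp f (ENNReal.ofReal p) (μ.restrict s)) (hvanish : ∀ x ∈ t \ s, f x = 0) :
    ∫ x in s, |f x| ^ p ∂μ ≤
      (1 - μ.real s / μ.real t) ^ (-p) * ∫ x in s, |f x - ⨍ y in t, f y ∂μ| ^ p ∂μ := by
  have hs_top : μ s ≠ ⊤ := (hμst.trans_le le_top).ne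
  have hs_pos : 0 < μ.real s := ENNReal.toReal_pos hs0 hs_top
  have hst_real : μ.real s < μ.real t := (ENNReal.toReal_lt_toReal hs_top ht_top).2 hμst
  set r := μ.real s / μ.real t with hr
  set θ := 1 - r
  set A := ⨍ y in t, f y ∂μ
  set P := ∫ x in s, |f x| ^ p ∂μ
  set R := ∫ x in s, |f x - A| ^ p ∂μ
  have hr0 : 0 < r := div_pos hs_pos (hs_pos.trans hst_real)
  have hθ0 : 0 < θ := sub_pos.2 ((div_lt_one (hs_pos.trans hst_real)).2 hst_real)
  have hA : A = r * ⨍ y in s, f y ∂μ := by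
    simp only [A, hr, setAverage_eq, smul_eq_mul,
      setIntegral_eq_of_subset_of_forall_sdiff_eq_zero ht hst hvanish]
    field_simp
  have hjensen : |A| ^ p * μ.real s ≤ r ^ p * P := by
    have hP : P = (⨍ x in s, |f x| ^ p ∂μ) * μ.real s := by
      rw [setAverage_eq, smul_eq_mul, mul_comm, mul_inv_cancel_left₀ hs_pos.ne']
    rw [hA, abs_mul, abs_of_pos hr0, Real.mul_rpow hr0.le (abs_nonneg _), hP, mul_assoc]
    gcongr
    exact abs_setAverage_rpow_le hp hs0 hs_top hf
  have hsplit := setIntegral_abs_rpow_le_weighted hp hθ0 hr0 (sub_add_cancel 1 r) hs_top hf A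
  have hrpow : r ^ (1 - p) * r ^ p = r := by
    rw [← Real.rpow_add hr0, sub_add_cancel, Real.rpow_one]
  have hθpow : θ ^ (1 - p) = θ * θ ^ (-p) := by
    rw [sub_eq_add_neg, Real.rpow_add hθ0, Real.rpow_one]
  have hlast : r ^ (1 - p) * |A| ^ p * μ.real s ≤ r * P :=
    calc r ^ (1 - p) * |A| ^ p * μ.real s = r ^ (1 - p) * (|A| ^ p * μ.real s) := mul_assoc ..
      _ ≤ r ^ (1 - p) * (r ^ p * P) := by gcongr
      _ = r * P := by rw [← mul_assoc, hrpow]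
  have habsorb : θ * P ≤ θ * (θ ^ (-p) * R) := by
    rw [hθpow, mul_assoc] at hsplit
    linarith [show θ * P = P - r * P by ring]
  exact le_of_mul_le_mul_left habsorb hθ0

end

theorem stmt3_general (τ δ : ℝ) (hτ : 1 ≤ τ) (hδ : 0 < δ)
    (f : ℝ → ℝ) (a b c d : ℝ) (hab : a < b) (hcd : c < d)
    (hsub : Icc c d ⊆ Icc a b)
    (hlen : b - a = (1 + δ) * (d - c))
    (hf : LocallyIntegrable f volume)
    (hvanish : ∀ x ∈ Icc a b \ Icc c d, f x = 0)
    (hLτ : IntegrableOn (fun x => |f x| ^ τ) (Icc a b) volume) :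
    (∫ x in Icc c d, |f x| ^ τ) ≤
      (1 + δ⁻¹) ^ τ *
        ∫ x in Icc a b, |f x - (b - a)⁻¹ * ∫ y in Icc a b, f y| ^ τ := by
  have hmem : MemLp f (ENNReal.ofReal τ) (volume.restrict (Icc a b)) := by
    refine (integrable_norm_rpow_iff (hf.integrableOn_isCompact isCompact_Icc).1
      (ENNReal.ofReal_pos.2 (by linarith)).ne' ENNReal.ofReal_ne_top).1 ?_
    simpa [IntegrableOn, Real.norm_eq_abs, ENNReal.toReal_ofReal (by linarith : (0 : ℝ) ≤ τ)]
      using hLτ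
  have hlt : volume (Icc c d) < volume (Icc a b) := by
    rw [Real.volume_Icc, Real.volume_Icc, ENNReal.ofReal_lt_ofReal_iff (by linarith)]
    nlinarith
  have key := setIntegral_abs_rpow_le_of_eq_zero_on_diff hτ measurableSet_Icc hsub
    (by simp [hcd]) hlt (by simp) (hmem.mono_measure (Measure.restrict_mono hsub le_rfl)) hvanish
  have hconst : (1 - (d - c) / (b - a)) ^ (-τ) = (1 + δ⁻¹) ^ τ := by
    have hθ : 1 - (d - c) / (b - a) = (1 + δ⁻¹)⁻¹ := by
      have := sub_pos.2 hcd
      rw [hlen]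
      field_simp
      ring
    rw [hθ, Real.inv_rpow (by positivity), Real.rpow_neg (by positivity), inv_inv]
  rw [setAverage_eq, Real.volume_real_Icc_of_le hcd.le, Real.volume_real_Icc_of_le hab.le,
    hconst, smul_eq_mul] at key
  refine key.trans (mul_le_mul_of_nonneg_left
    (setIntegral_mono_set ?_ (.of_forall fun x => by positivity) hsub.eventuallyLE) (by positivity))
  exact (hmem.sub (memLp_const _)).integrable_abs_rpow (by linarith)

/-- If `f ∈ BMO(ℝ)` vanishes on `J \ I`, where `I = [c,d] ⊆ J = [a,b]` and
`|J| = (1+δ)|I|`, then for `1 ≤ τ < ∞`,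
`∫_I |f|^τ ≤ (1+δ⁻¹)^τ ∫_J |f − avg_J f|^τ`. -/
theorem stmt3 (τ δ : ℝ) (hτ : 1 ≤ τ) (hδ : 0 < δ)
    (f : ℝ → ℝ) (a b c d : ℝ) (hab : a < b) (hcd : c < d)
    (hsub : Icc c d ⊆ Icc a b)
    (hlen : b - a = (1 + δ) * (d - c))
    (hf : LocallyIntegrable f volume)
    (hbmo : ∃ M : ℝ, ∀ u v : ℝ, u < v →
      (∫ x in Icc u v, |f x - (v - u)⁻¹ * ∫ y in Icc u v, f y|) ≤ M * (v - u))
    (hvanish : ∀ x ∈ Icc a b \ Icc c d, f x = 0)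
    (hLτ : IntegrableOn (fun x => |f x| ^ τ) (Icc a b) volume) :
    (∫ x in Icc c d, |f x| ^ τ) ≤
      (1 + δ⁻¹) ^ τ *
        ∫ x in Icc a b, |f x - (b - a)⁻¹ * ∫ y in Icc a b, f y| ^ τ :=
  stmt3_general τ δ hτ hδ f a b c d hab hcd hsub hlen hf hvanish hLτ
end

section
/- Let 1 ≤ q < p ≤ ∞, J a compact interval, f ∈ L^p(J), and k ≥ 1. Suppose P ∈ Π_k satisfies ‖f − P‖_{L^q(J)} ≤ A · E_k(f,J)_q for some A ≥ 1 (P is a near-best L^q approximation). Then P is a near-best L^p approximation: ‖f − P‖_{L^p(J)} ≤ c(A,k,p,q) · E_k(f,J)_p. -/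
open MeasureTheory Set
open scoped ENNReal NNReal

/-!
Fix any competitor `Q` of degree `< k`. On the finite-dimensional space of polynomials of
degree `< k` all `L^r([0,1])` norms are equivalent, and rescaling `[0,1]` onto `J = [a,b]` turns
this into the Nikolskii inequality `‖R‖_p ≤ K |J|^(1/p-1/q) ‖R‖_q`. For `R = Q - P` the
near-best hypothesis gives `‖Q - P‖_q ≤ ‖f - P‖_q + ‖f - Q‖_q ≤ (1 + A) ‖f - Q‖_q`, and Hölder's
inequality `‖f - Q‖_q ≤ |J|^(1/q-1/p) ‖f - Q‖_p` makes the powers of `|J|` cancel, so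
`‖f - P‖_p ≤ (1 + K (1 + A)) ‖f - Q‖_p`. Taking the infimum over `Q` finishes the proof.
-/

/-- The error `E_k(f,J)_p` of best `L^p(J)` approximation by polynomials of degree ≤ k-1. -/
noncomputable def EK (k : ℕ) (f : ℝ → ℝ) (a b : ℝ) (p : ℝ≥0∞) : ℝ≥0∞ :=
  ⨅ P : {P : Polynomial ℝ // P.degree < (k : ℕ)},
    eLpNorm (fun x => f x - (P : Polynomial ℝ).eval x) p (volume.restrict (Icc a b))

theorem LinearMap.exists_enorm_le_mul_enorm_of_injective {𝕜 E F G : Type*}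
    [NontriviallyNormedField 𝕜] [CompleteSpace 𝕜] [AddCommGroup E] [Module 𝕜 E]
    [FiniteDimensional 𝕜 E] [NormedAddCommGroup F] [NormedSpace 𝕜 F]
    [NormedAddCommGroup G] [NormedSpace 𝕜 G]
    (T : E →ₗ[𝕜] F) (hT : Function.Injective T) (Φ : E →ₗ[𝕜] G) :
    ∃ C : ℝ≥0, ∀ x, ‖Φ x‖ₑ ≤ C * ‖T x‖ₑ := by
  let L := LinearMap.toContinuousLinearMap (Φ ∘ₗ (LinearEquiv.ofInjective T hT).symm.toLinearMap)
  refine ⟨‖L‖₊, fun x => ?_⟩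
  have hL : L (LinearEquiv.ofInjective T hT x) = Φ x := by
    simp only [L, LinearMap.coe_toContinuousLinearMap', LinearMap.coe_comp,
      LinearEquiv.coe_coe, Function.comp_apply, LinearEquiv.symm_apply_apply]
  calc ‖Φ x‖ₑ = ‖L (LinearEquiv.ofInjective T hT x)‖ₑ := by rw [hL]
    _ ≤ ‖L‖ₑ * ‖LinearEquiv.ofInjective T hT x‖ₑ := L.le_opENorm _
    _ = ‖L‖₊ * ‖T x‖ₑ := rfl

theorem ContinuousOn.memLp_restrict_of_isCompact {X E : Type*} [TopologicalSpace X]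
    [MeasurableSpace X] [OpensMeasurableSpace X] [T2Space X] [NormedAddCommGroup E]
    [SecondCountableTopologyEither X E] {μ : Measure X} [IsFiniteMeasureOnCompacts μ]
    {s : Set X} {f : X → E} (hs : IsCompact s) (hf : ContinuousOn f s) (r : ℝ≥0∞) :
    MemLp f r (μ.restrict s) := by
  have : IsFiniteMeasure (μ.restrict s) := isFiniteMeasure_restrict.2 hs.measure_lt_top.ne
  obtain ⟨C, hC⟩ := hs.exists_bound_of_continuousOn hf
  have hmeas := hf.aestronglyMeasurable (μ := μ) hs.measurableSet
  refine (memLp_top_of_bound hmeas C ?_).mono_exponent le_top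
  filter_upwards [ae_restrict_mem hs.measurableSet] using hC

theorem eLpNorm_restrict_Icc_eq_mul_eLpNorm_comp_affine {E : Type*} [NormedAddCommGroup E]
    (g : ℝ → E) (r : ℝ≥0∞) {a b : ℝ} (hab : a < b) :
    eLpNorm g r (volume.restrict (Icc a b)) = ENNReal.ofReal (b - a) ^ (1 / r.toReal) *
      eLpNorm (fun t => g (a + (b - a) * t)) r (volume.restrict (Icc 0 1)) := by
  have hd : 0 < b - a := sub_pos.2 hab
  set φ : ℝ → ℝ := fun t => a + (b - a) * t
  have hφ : MeasurableEmbedding φ :=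
    (Homeomorph.addLeft a).measurableEmbedding.comp
      (Homeomorph.mulLeft₀ _ hd.ne').measurableEmbedding
  have hvol : ENNReal.ofReal (b - a) • Measure.map φ volume = volume := by
    change ENNReal.ofReal (b - a) •
      Measure.map ((fun x => a + x) ∘ fun x => (b - a) * x) volume = volume
    rw [← Measure.map_map (measurable_const_add a) (measurable_const_mul _), ← Measure.map_smul,
      show ENNReal.ofReal (b - a) = ENNReal.ofReal |b - a| by rw [abs_of_pos hd],
      Real.smul_map_volume_mul_left hd.ne', map_add_left_eq_self]
  have hpre : φ ⁻¹' Icc a b = Icc 0 1 := by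
    ext t
    simp only [φ, mem_preimage, mem_Icc]
    constructor <;> rintro ⟨h₁, h₂⟩ <;> constructor <;> nlinarith
  calc eLpNorm g r (volume.restrict (Icc a b))
      = eLpNorm g r (ENNReal.ofReal (b - a) • Measure.map φ (volume.restrict (Icc 0 1))) := by
        rw [← hpre, ← hφ.restrict_map, ← Measure.restrict_smul, hvol]
    _ = _ := by
        rw [eLpNorm_smul_measure_of_ne_zero (by simpa using hd), hφ.eLpNorm_map_measure,
          one_div, ENNReal.toReal_inv, smul_eq_mul, one_div]
        rfl

namespace Polynomial

theorem memLp_eval_Icc (R : ℝ[X]) (r : ℝ≥0∞) (a b : ℝ) :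
    MemLp (fun x => R.eval x) r (volume.restrict (Icc a b)) :=
  R.continuous.continuousOn.memLp_restrict_of_isCompact isCompact_Icc r

noncomputable def toLpIcc (r : ℝ≥0∞) (a b : ℝ) :
    ℝ[X] →ₗ[ℝ] Lp ℝ r (volume.restrict (Icc a b)) where
  toFun R := (R.memLp_eval_Icc r a b).toLp
  map_add' R S := by
    simp_rw [eval_add]
    exact (R.memLp_eval_Icc r a b).toLp_add (S.memLp_eval_Icc r a b)
  map_smul' c R := by
    simp_rw [eval_smul]
    exact (R.memLp_eval_Icc r a b).toLp_const_smul c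

theorem enorm_toLpIcc (r : ℝ≥0∞) (a b : ℝ) (R : ℝ[X]) :
    ‖toLpIcc r a b R‖ₑ = eLpNorm (fun x => R.eval x) r (volume.restrict (Icc a b)) :=
  Lp.enorm_toLp (R.memLp_eval_Icc r a b)

theorem toLpIcc_injective (r : ℝ≥0∞) {a b : ℝ} (hab : a < b) :
    Function.Injective (toLpIcc r a b) := by
  refine (injective_iff_map_eq_zero _).2 fun R hR => ?_
  have hae : (fun x => R.eval x) =ᵐ[volume.restrict (Icc a b)] 0 :=
    (MemLp.toLp_eq_toLp_iff (R.memLp_eval_Icc r a b) MemLp.zero).1 <| by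
      rw [MemLp.toLp_zero]; exact hR
  have hzero : EqOn (fun x => R.eval x) 0 (Icc a b) :=
    Measure.eqOn_Icc_of_ae_eq volume hab.ne hae R.continuous.continuousOn continuousOn_const
  exact R.eq_zero_of_infinite_isRoot ((Icc_infinite hab).mono fun x hx => hzero hx)

theorem exists_eLpNorm_le_mul_eLpNorm_Icc (k : ℕ) (p q : ℝ≥0∞) [Fact (1 ≤ p)] [Fact (1 ≤ q)]
    {a b : ℝ} (hab : a < b) :
    ∃ C : ℝ≥0, ∀ R : ℝ[X], R.degree < k →
      eLpNorm (fun x => R.eval x) p (volume.restrict (Icc a b)) ≤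
        C * eLpNorm (fun x => R.eval x) q (volume.restrict (Icc a b)) := by
  obtain ⟨C, hC⟩ := LinearMap.exists_enorm_le_mul_enorm_of_injective
    ((toLpIcc q a b).domRestrict (degreeLT ℝ k))
    ((toLpIcc_injective q hab).comp Subtype.val_injective)
    ((toLpIcc p a b).domRestrict (degreeLT ℝ k))
  refine ⟨C, fun R hR => ?_⟩
  simpa only [LinearMap.domRestrict_apply, enorm_toLpIcc] using hC ⟨R, mem_degreeLT.2 hR⟩

theorem exists_eLpNorm_le_mul_rpow_mul_eLpNorm (k : ℕ) (p q : ℝ≥0∞) [Fact (1 ≤ p)]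
    [Fact (1 ≤ q)] :
    ∃ K : ℝ≥0, ∀ (a b : ℝ) (R : ℝ[X]), a < b → R.degree < k →
      eLpNorm (fun x => R.eval x) p (volume.restrict (Icc a b)) ≤
        K * ENNReal.ofReal (b - a) ^ (1 / p.toReal - 1 / q.toReal) *
          eLpNorm (fun x => R.eval x) q (volume.restrict (Icc a b)) := by
  obtain ⟨K, hK⟩ := exists_eLpNorm_le_mul_eLpNorm_Icc k p q (zero_lt_one' ℝ)
  refine ⟨K, fun a b R hab hR => ?_⟩
  set d := ENNReal.ofReal (b - a)
  have hd₀ : d ≠ 0 := by simpa [d] using hab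
  have hd : d ≠ ⊤ := ENNReal.ofReal_ne_top
  set S := R.comp (C (b - a) * X + C a)
  have hS : (fun t => S.eval t) = fun t => R.eval (a + (b - a) * t) := by
    ext t
    simp only [S, eval_comp, eval_add, eval_mul, eval_C, eval_X]
    ring_nf
  have hSdeg : S.degree < k := by
    rcases eq_or_ne R 0 with rfl | hR₀
    · simp [S]
    · calc S.degree ≤ S.natDegree := degree_le_natDegree
        _ = R.natDegree := by rw [natDegree_comp, natDegree_linear (sub_pos.2 hab).ne', mul_one]
        _ < k := by exact_mod_cast (natDegree_lt_iff_degree_lt hR₀).2 hR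
  rw [eLpNorm_restrict_Icc_eq_mul_eLpNorm_comp_affine _ p hab,
    eLpNorm_restrict_Icc_eq_mul_eLpNorm_comp_affine _ q hab, ← hS,
    ENNReal.rpow_sub _ _ hd₀ hd]
  calc d ^ (1 / p.toReal) * eLpNorm (fun t => S.eval t) p (volume.restrict (Icc 0 1))
      ≤ d ^ (1 / p.toReal) * (K * eLpNorm (fun t => S.eval t) q (volume.restrict (Icc 0 1))) := by
        gcongr; exact hK S hSdeg
    _ = _ := by
        have hq₀ : d ^ (1 / q.toReal) ≠ 0 := (ENNReal.rpow_pos (pos_iff_ne_zero.2 hd₀) hd).ne'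
        have hq : d ^ (1 / q.toReal) ≠ ⊤ := ENNReal.rpow_ne_top_of_nonneg (by positivity) hd
        rw [show ENNReal.ofReal (b - a) = d from rfl, mul_assoc, ← mul_assoc (_ / _),
          ENNReal.div_mul_cancel hq₀ hq]
        ring

end Polynomial

theorem eLpNorm_sub_le_mul_of_eLpNorm_sub_le {α E : Type*} [MeasurableSpace α]
    [NormedAddCommGroup E] {μ : Measure α} [IsFiniteMeasure μ] [NeZero μ] {p q : ℝ≥0∞}
    (hq : 1 ≤ q) (hqp : q ≤ p) {f P Q : α → E} (hf : AEStronglyMeasurable f μ)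
    (hP : AEStronglyMeasurable P μ) (hQ : AEStronglyMeasurable Q μ) {A C : ℝ≥0∞}
    (hQP : eLpNorm (Q - P) p μ ≤
      C * μ univ ^ (1 / p.toReal - 1 / q.toReal) * eLpNorm (Q - P) q μ)
    (hP_near : eLpNorm (f - P) q μ ≤ A * eLpNorm (f - Q) q μ) :
    eLpNorm (f - P) p μ ≤ (1 + C * (1 + A)) * eLpNorm (f - Q) p μ := by
  set d := μ univ
  have hd₀ : d ≠ 0 := NeZero.ne _
  have hd : d ≠ ⊤ := measure_ne_top μ univ
  have hcancel : d ^ (1 / p.toReal - 1 / q.toReal) * d ^ (1 / q.toReal - 1 / p.toReal) = 1 := by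
    rw [← ENNReal.rpow_add _ _ hd₀ hd, sub_add_sub_cancel, sub_self, ENNReal.rpow_zero]
  have hfQ : eLpNorm (f - Q) q μ ≤ eLpNorm (f - Q) p μ * d ^ (1 / q.toReal - 1 / p.toReal) :=
    eLpNorm_le_eLpNorm_mul_rpow_measure_univ hqp (hf.sub hQ)
  have hQP_q : eLpNorm (Q - P) q μ ≤ (1 + A) * eLpNorm (f - Q) q μ :=
    calc eLpNorm (Q - P) q μ = eLpNorm ((f - P) - (f - Q)) q μ := by rw [sub_sub_sub_cancel_left]
      _ ≤ eLpNorm (f - P) q μ + eLpNorm (f - Q) q μ := eLpNorm_sub_le (hf.sub hP) (hf.sub hQ) hq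
      _ ≤ (1 + A) * eLpNorm (f - Q) q μ := by rw [add_mul, one_mul, add_comm]; gcongr
  have hQP_p : eLpNorm (Q - P) p μ ≤ C * (1 + A) * eLpNorm (f - Q) p μ :=
    calc eLpNorm (Q - P) p μ
        ≤ C * d ^ (1 / p.toReal - 1 / q.toReal) *
            ((1 + A) * (eLpNorm (f - Q) p μ * d ^ (1 / q.toReal - 1 / p.toReal))) := by
          refine hQP.trans ?_
          gcongr
          exact hQP_q.trans (by gcongr)
      _ = C * (1 + A) * eLpNorm (f - Q) p μ *
            (d ^ (1 / p.toReal - 1 / q.toReal) * d ^ (1 / q.toReal - 1 / p.toReal)) := by ring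
      _ = C * (1 + A) * eLpNorm (f - Q) p μ := by rw [hcancel, mul_one]
  calc eLpNorm (f - P) p μ = eLpNorm ((f - Q) + (Q - P)) p μ := by rw [sub_add_sub_cancel]
    _ ≤ eLpNorm (f - Q) p μ + eLpNorm (Q - P) p μ :=
        eLpNorm_add_le (hf.sub hQ) (hQ.sub hP) (hq.trans hqp)
    _ ≤ (1 + C * (1 + A)) * eLpNorm (f - Q) p μ := by
        rw [add_mul, one_mul]; gcongr

theorem stmt8_general (k : ℕ) (p q : ℝ≥0∞) (hq : 1 ≤ q) (hqp : q < p)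
    (A : ℝ≥0∞) (hAfin : A ≠ ⊤) :
    ∃ c : ℝ≥0∞, c ≠ ⊤ ∧ ∀ (f : ℝ → ℝ) (a b : ℝ) (P : Polynomial ℝ),
      a < b → P.degree < (k : ℕ) →
      MemLp f p (volume.restrict (Icc a b)) →
      eLpNorm (fun x => f x - P.eval x) q (volume.restrict (Icc a b)) ≤ A * EK k f a b q →
      eLpNorm (fun x => f x - P.eval x) p (volume.restrict (Icc a b)) ≤ c * EK k f a b p := by
  have : Fact (1 ≤ q) := ⟨hq⟩
  have : Fact (1 ≤ p) := ⟨hq.trans hqp.le⟩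
  obtain ⟨K, hK⟩ := Polynomial.exists_eLpNorm_le_mul_rpow_mul_eLpNorm k p q
  refine ⟨1 + K * (1 + A), by finiteness, fun f a b P hab hP hf hP_near => ?_⟩
  have : NeZero (volume.restrict (Icc a b)) := ⟨by simpa [Measure.restrict_eq_zero] using hab⟩
  have hμ : volume.restrict (Icc a b) univ = ENNReal.ofReal (b - a) := by simp
  rw [EK, ENNReal.mul_iInf_of_ne (by positivity) (by finiteness)]
  refine le_iInf fun Q => ?_
  refine eLpNorm_sub_le_mul_of_eLpNorm_sub_le hq hqp.le hf.1 P.continuous.aestronglyMeasurable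
    Q.1.continuous.aestronglyMeasurable ?_ (hP_near.trans ?_)
  · rw [hμ]
    have hQP := hK a b (Q.1 - P) hab ((Polynomial.degree_sub_le _ _).trans_lt (max_lt Q.2 hP))
    simp only [Polynomial.eval_sub] at hQP
    exact hQP
  · gcongr
    exact iInf_le _ Q

/-- a near-best `L^q` polynomial approximation is a near-best `L^p`
approximation for `1 ≤ q < p ≤ ∞`. -/
theorem stmt8 (k : ℕ) (hk : 1 ≤ k) (p q : ℝ≥0∞) (hq : 1 ≤ q) (hqp : q < p)
    (A : ℝ≥0∞) (hA : 1 ≤ A) (hAfin : A ≠ ⊤) :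
    ∃ c : ℝ≥0∞, c ≠ ⊤ ∧ ∀ (f : ℝ → ℝ) (a b : ℝ) (P : Polynomial ℝ),
      a < b → P.degree < (k : ℕ) →
      MemLp f p (volume.restrict (Icc a b)) →
      eLpNorm (fun x => f x - P.eval x) q (volume.restrict (Icc a b)) ≤ A * EK k f a b q →
      eLpNorm (fun x => f x - P.eval x) p (volume.restrict (Icc a b)) ≤ c * EK k f a b p :=
  stmt8_general k p q hq hqp A hAfin
end

section
/- Let f be a continuous piecewise polynomial on ℝ of degree ≤ k−1 with respect to a partition containing an unbounded interval J on which f vanishes, and let g = f restricted to a neighboring compact interval J' where f equals a polynomial P of degree ≤ k−1. Then ‖P'‖_{L^∞(J')} ≤ (c/|J'|) ‖f‖_BMO, where c depends only on k. -/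
/-! Subtracting the mean of `g` over `J = [a, b]` from `P` does not change `P'` and turns the BMO
bound into `∫_J |Q| ≤ M |J|`. After the affine change of variables `J → [0, 1]` it remains to
bound `|Q'|` on `[0, 1]` by `∫_0^1 |Q|` for `Q` of degree `≤ k`. The former is controlled by the
coefficients of `Q`, and the coefficients by `∫_0^1 |Q|`: on the finite-dimensional coefficient
space the latter is continuous, positively homogeneous and positive off `0`, hence bounded below
on the unit sphere. -/

open MeasureTheory Set Polynomial

theorem exists_pos_mul_norm_le_of_homogeneous {E : Type*} [NormedAddCommGroup E]
    [NormedSpace ℝ E] [FiniteDimensional ℝ E] (f : E → ℝ) (hf : Continuous f)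
    (hsmul : ∀ (t : ℝ) (x : E), 0 < t → f (t • x) = t * f x) (hpos : ∀ x ≠ 0, 0 < f x) :
    ∃ m > 0, ∀ x, m * ‖x‖ ≤ f x := by
  have hf0 : f 0 = 0 := by
    have h := hsmul 2 0 two_pos
    rw [smul_zero] at h
    linarith
  rcases subsingleton_or_nontrivial E with hE | hE
  · exact ⟨1, one_pos, fun x => by simp [Subsingleton.elim x 0, hf0]⟩
  obtain ⟨x₀, hx₀, hmin⟩ := (isCompact_sphere (0 : E) 1).exists_isMinOn
    (NormedSpace.sphere_nonempty.mpr zero_le_one) hf.continuousOn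
  have hx₀ : ‖x₀‖ = 1 := by simpa using hx₀
  refine ⟨f x₀, hpos x₀ (norm_ne_zero_iff.mp (by simp [hx₀])), fun x => ?_⟩
  rcases eq_or_ne x 0 with rfl | hx
  · simp [hf0]
  have hx' : 0 < ‖x‖ := norm_pos_iff.mpr hx
  have hmem : ‖x‖⁻¹ • x ∈ Metric.sphere (0 : E) 1 := by
    simp [norm_smul, hx'.ne']
  have h : f x₀ ≤ f (‖x‖⁻¹ • x) := hmin hmem
  rwa [hsmul _ _ (inv_pos.mpr hx'), le_inv_mul_iff₀ hx', mul_comm] at h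

theorem Polynomial.intervalIntegral_abs_eval_pos {p : ℝ[X]} (hp : p ≠ 0) {a b : ℝ}
    (hab : a < b) : 0 < ∫ x in a..b, |p.eval x| := by
  rw [intervalIntegral.integral_pos_iff_support_of_nonneg_ae
    (Filter.Eventually.of_forall fun x => abs_nonneg _)
    (p.continuous.abs.intervalIntegrable a b)]
  refine ⟨hab, ?_⟩
  have hsub : Ioc a b \ {x | p.IsRoot x} ⊆ Function.support (fun x => |p.eval x|) ∩ Ioc a b :=
    fun x hx => ⟨by simpa using hx.2, hx.1⟩
  have hroots : volume {x | p.IsRoot x} = 0 := (finite_setOfPred_isRoot hp).measure_zero _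
  calc (0 : ENNReal) < volume (Ioc a b) := by simp [hab]
    _ = volume (Ioc a b \ {x | p.IsRoot x}) := (measure_sdiff_null hroots).symm
    _ ≤ _ := measure_mono hsub

theorem Polynomial.abs_eval_le_sum_abs_coeff {p : ℝ[X]} {n : ℕ} (hp : p.natDegree < n) {t : ℝ}
    (ht : |t| ≤ 1) : |p.eval t| ≤ ∑ i ∈ Finset.range n, |p.coeff i| := by
  rw [eval_eq_sum_range' hp]
  refine (Finset.abs_sum_le_sum_abs _ _).trans (Finset.sum_le_sum fun i _ => ?_)
  rw [abs_mul, abs_pow]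
  exact mul_le_of_le_one_right (abs_nonneg _) (pow_le_one₀ (abs_nonneg t) ht)

def Polynomial.coeffVec (k : ℕ) (p : ℝ[X]) : Fin (k + 1) → ℝ := fun i => p.coeff i

theorem Polynomial.abs_coeff_le_norm_coeffVec {k : ℕ} {p : ℝ[X]} (hp : p.natDegree ≤ k) (i : ℕ) :
    |p.coeff i| ≤ ‖p.coeffVec k‖ := by
  by_cases hi : i < k + 1
  · simpa [coeffVec, Real.norm_eq_abs] using norm_le_pi_norm (p.coeffVec k) ⟨i, hi⟩
  · rw [coeff_eq_zero_of_natDegree_lt (by omega), abs_zero]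
    exact norm_nonneg _

theorem Polynomial.abs_derivative_eval_le {k : ℕ} {p : ℝ[X]} (hp : p.natDegree ≤ k) {t : ℝ}
    (ht : |t| ≤ 1) : |p.derivative.eval t| ≤ (k + 1) ^ 2 * ‖p.coeffVec k‖ := by
  have hdeg : p.derivative.natDegree < k + 1 :=
    (natDegree_derivative_le p).trans_lt (by omega)
  refine (abs_eval_le_sum_abs_coeff hdeg ht).trans ?_
  have hterm : ∀ j ∈ Finset.range (k + 1), |p.derivative.coeff j| ≤ (k + 1) * ‖p.coeffVec k‖ := by
    intro j hj
    rw [coeff_derivative, abs_mul, mul_comm]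
    gcongr
    · rw [abs_of_nonneg (by positivity)]
      exact_mod_cast Finset.mem_range.mp hj
    · exact abs_coeff_le_norm_coeffVec hp _
  calc _ ≤ ∑ _j ∈ Finset.range (k + 1), ((k + 1) * ‖p.coeffVec k‖ : ℝ) := Finset.sum_le_sum hterm
    _ = _ := by rw [Finset.sum_const, Finset.card_range, nsmul_eq_mul]; push_cast; ring

theorem Polynomial.exists_pos_mul_norm_coeffVec_le_integral (k : ℕ) :
    ∃ m > 0, ∀ p : ℝ[X], p.natDegree ≤ k → m * ‖p.coeffVec k‖ ≤ ∫ t in (0 : ℝ)..1, |p.eval t| := by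
  let e := degreeLTEquiv ℝ (k + 1)
  let F : (Fin (k + 1) → ℝ) → ℝ := fun c => ∫ t in (0 : ℝ)..1, |(e.symm c : ℝ[X]).eval t|
  have hcont : Continuous F := by
    have heval : ∀ c t, (e.symm c : ℝ[X]).eval t = ∑ i, c i * t ^ (i : ℕ) := fun c t => by
      simpa [e] using eval_eq_sum_degreeLTEquiv (e.symm c).2 t
    simp only [F, heval]
    fun_prop
  have hsmul : ∀ (s : ℝ) c, 0 < s → F (s • c) = s * F c := fun s c hs => by
    simp only [F, map_smul, Submodule.coe_smul, eval_smul, smul_eq_mul, abs_mul, abs_of_pos hs,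
      intervalIntegral.integral_const_mul]
  have hpos : ∀ c ≠ 0, 0 < F c := fun c hc =>
    intervalIntegral_abs_eval_pos (by simpa using hc) zero_lt_one
  obtain ⟨m, hm, hle⟩ := exists_pos_mul_norm_le_of_homogeneous F hcont hsmul hpos
  refine ⟨m, hm, fun p hp => ?_⟩
  have hmem : p ∈ degreeLT ℝ (k + 1) := mem_degreeLT.mpr
    ((degree_le_natDegree).trans_lt (by exact_mod_cast Nat.lt_succ_of_le hp))
  have hsymm : (e.symm (p.coeffVec k) : ℝ[X]) = p := by
    rw [show p.coeffVec k = e ⟨p, hmem⟩ from rfl, e.symm_apply_apply]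
  simpa [F, hsymm] using hle (p.coeffVec k)

theorem Polynomial.exists_abs_derivative_eval_le_integral_unitInterval (k : ℕ) :
    ∃ C > 0, ∀ p : ℝ[X], p.natDegree ≤ k → ∀ t ∈ Icc (0 : ℝ) 1,
      |p.derivative.eval t| ≤ C * ∫ s in (0 : ℝ)..1, |p.eval s| := by
  obtain ⟨m, hm, hle⟩ := exists_pos_mul_norm_coeffVec_le_integral k
  refine ⟨(k + 1) ^ 2 / m, by positivity, fun p hp t ht => ?_⟩
  have ht' : |t| ≤ 1 := abs_le.mpr ⟨by linarith [ht.1], ht.2⟩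
  calc |p.derivative.eval t| ≤ (k + 1) ^ 2 * ‖p.coeffVec k‖ := abs_derivative_eval_le hp ht'
    _ = (k + 1) ^ 2 / m * (m * ‖p.coeffVec k‖) := by field_simp
    _ ≤ _ := by gcongr; exact hle p hp

theorem Polynomial.exists_abs_derivative_eval_le_integral (k : ℕ) :
    ∃ C > 0, ∀ p : ℝ[X], p.natDegree ≤ k → ∀ a b : ℝ, a < b → ∀ x ∈ Icc a b,
      |p.derivative.eval x| ≤ C / (b - a) ^ 2 * ∫ s in a..b, |p.eval s| := by
  obtain ⟨C, hC, hle⟩ := exists_abs_derivative_eval_le_integral_unitInterval k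
  refine ⟨C, hC, fun p hp a b hab x hx => ?_⟩
  have hba : 0 < b - a := sub_pos.mpr hab
  set q := p.comp (Polynomial.C (b - a) * X + Polynomial.C a)
  have hq : q.natDegree ≤ k :=
    natDegree_comp_le.trans (by nlinarith [natDegree_linear_le (a := b - a) (b := a)])
  have hq' : ∀ t, q.derivative.eval t = (b - a) * p.derivative.eval ((b - a) * t + a) := by
    intro t
    rw [derivative_comp, eval_mul, eval_comp]
    simp
  have hqint : ∫ s in (0 : ℝ)..1, |q.eval s| = (b - a)⁻¹ * ∫ s in a..b, |p.eval s| := by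
    simp only [q, eval_comp, eval_add, eval_mul, eval_C, eval_X]
    rw [intervalIntegral.integral_comp_mul_add (fun s => |p.eval s|) hba.ne']
    simp
  have ht : (x - a) / (b - a) ∈ Icc (0 : ℝ) 1 := by
    constructor
    · exact div_nonneg (by linarith [hx.1]) hba.le
    · rw [div_le_one hba]; linarith [hx.2]
  have hkey := hle q hq _ ht
  rw [hq', hqint, abs_mul, abs_of_pos hba, mul_div_cancel₀ _ hba.ne', sub_add_cancel] at hkey
  calc |p.derivative.eval x| = (b - a)⁻¹ * ((b - a) * |p.derivative.eval x|) := by field_simp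
    _ ≤ (b - a)⁻¹ * (C * ((b - a)⁻¹ * ∫ s in a..b, |p.eval s|)) := by gcongr
    _ = _ := by field_simp

/-- If `g ∈ BMO(ℝ)` (with BMO norm bound `M`) coincides with a polynomial
`P ∈ Π_k` on a compact interval `J = [a,b]`, then
`‖P'‖_{L^∞(J)} ≤ (c(k)/|J|) ‖g‖_BMO`. -/
theorem stmt15 (k : ℕ) :
    ∃ c : ℝ, 0 < c ∧ ∀ (g : ℝ → ℝ) (P : Polynomial ℝ) (a b M : ℝ),
      a < b → P.degree < (k : ℕ) →
      LocallyIntegrable g volume → 0 ≤ M →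
      (∀ u v : ℝ, u < v →
        (∫ x in Icc u v, |g x - (v - u)⁻¹ * ∫ y in Icc u v, g y|) ≤ M * (v - u)) →
      (∀ x ∈ Icc a b, g x = P.eval x) →
      ∀ x ∈ Icc a b, |P.derivative.eval x| ≤ c / (b - a) * M := by
  obtain ⟨C, hC, hle⟩ := exists_abs_derivative_eval_le_integral k
  refine ⟨C, hC, fun g P a b M hab hdeg _ _ hbmo hg x hx => ?_⟩
  set Q := P - Polynomial.C ((b - a)⁻¹ * ∫ y in Icc a b, g y)
  have hQ : Q.natDegree ≤ k := (natDegree_sub_le _ _).trans <| by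
    rw [natDegree_C, max_le_iff]
    exact ⟨natDegree_le_of_degree_le hdeg.le, k.zero_le⟩
  have hQint : ∫ s in a..b, |Q.eval s| ≤ M * (b - a) := by
    rw [intervalIntegral.integral_of_le hab.le, ← integral_Icc_eq_integral_Ioc]
    refine le_of_eq_of_le (setIntegral_congr_fun measurableSet_Icc fun y hy => ?_) (hbmo a b hab)
    simp [Q, hg y hy]
  have hba : 0 < b - a := sub_pos.mpr hab
  calc |P.derivative.eval x| = |Q.derivative.eval x| := by simp [Q]
    _ ≤ C / (b - a) ^ 2 * ∫ s in a..b, |Q.eval s| := hle Q hQ a b hab x hx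
    _ ≤ C / (b - a) ^ 2 * (M * (b - a)) := by gcongr
    _ = C / (b - a) * M := by field_simp
end
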